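/- Let n ≥ 1 and let ξ be a symmetric canonical element for the integer lattice ℤ^n of Sp(n), with coordinates a_1 ≥ a_2 ≥ … ≥ a_n ≥ 0. Set m_ξ^+ = 2·#{j : a_j is odd} and m_ξ^- = 2·#{j : a_j is even}, assume m_ξ^+ ≤ m_ξ^-, and write m = m_ξ^+/2 (so that the associated inner symmetric space N_ξ is the quaternionic Grassmannian G^ℍ_m(n)). Then for every k with 1 ≤ k ≤ n−2m+1 one has 2(a_1+⋯+a_k) ≤ 4mk, and for every k with n−2m+1 < k ≤ n one has 2(a_1+⋯+a_k) ≤ 4m(n−2m+1) + (k−n+2m−1)(2m+n−k). In particular 2a_1 ≤ 4m, and 2(a_1+a_2) ≤ 8m if 2m < n while 2(a_1+a_2) ≤ 8m−2 if 2m = n. -/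

import Mathlib

open scoped Classical

/-- The duals of the simple roots of `sp(n)` (1-based index):
`H_i = E_1+⋯+E_i` for `i ≤ n-1` and `H_n = (E_1+⋯+E_n)/2`. -/
noncomputable def Hsp (n i : ℕ) : Fin n → ℝ :=
  if i = n then fun _ => 1 / 2 else fun j => if (j : ℕ) + 1 ≤ i then 1 else 0

/-- The integer lattice `ℤ^n` inside `ℝ^n` (the integer lattice of `Sp(n)`). -/
def IntLat (n : ℕ) : Set (Fin n → ℝ) := {v | ∀ j, ∃ m : ℤ, v j = m}

/-- The set of symmetric canonical elements for a lattice `𝔏 ⊆ ℝ^n`. -/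
def SymCanonSet (n : ℕ) (𝔏 : Set (Fin n → ℝ)) (H : ℕ → Fin n → ℝ) :
    Set (Fin n → ℝ) :=
  {ξ | ∃ c : ℕ → ℕ, ξ = ∑ i ∈ Finset.Icc 1 n, c i • H i ∧ ξ ∈ 𝔏 ∧
    ∀ c' : ℕ → ℕ, (∀ i ∈ Finset.Icc 1 n, c' i ≤ c i) →
      (∑ i ∈ Finset.Icc 1 n, c' i • H i) ∈ 𝔏 →
      (ξ - ∑ i ∈ Finset.Icc 1 n, c' i • H i) ∈ (fun v => (2 : ℝ) • v) '' 𝔏 →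
      (∑ i ∈ Finset.Icc 1 n, c' i • H i) = ξ}

/-- Sum of the first `k` (1-based) coordinates of `v`. -/
def partialSum (n : ℕ) (v : Fin n → ℝ) (k : ℕ) : ℝ :=
  ∑ j ∈ Finset.univ.filter (fun j : Fin n => (j : ℕ) + 1 ≤ k), v j

/-- Number of coordinates of `v` equal to an odd integer. -/
noncomputable def nOdd (n : ℕ) (v : Fin n → ℝ) : ℕ :=
  (Finset.univ.filter fun j : Fin n => ∃ m : ℤ, Odd m ∧ v j = m).card

/-- Number of coordinates of `v` equal to an even integer. -/
noncomputable def nEven (n : ℕ) (v : Fin n → ℝ) : ℕ :=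
  (Finset.univ.filter fun j : Fin n => ∃ m : ℤ, Even m ∧ v j = m).card

/-!
Write `ξ = ∑ cᵢ Hᵢ`, so that `a_j = c_j + ⋯ + c_{n-1} + c_n / 2`. Minimality of `ξ` forces
`cᵢ ≤ 1` for `i < n` (otherwise `2Hᵢ ∈ 2ℤⁿ` could be removed) and `c_n ≤ 3` (otherwise
`4H_n = 2(1,…,1)` could be removed), and integrality of `a_n` makes `c_n` even. Hence the
coordinates descend in steps of `0` or `1` to `a_n ∈ {0, 1}`. This gives `a_j ≤ n - j + 1`, and,
since every odd value up to `a_1` is attained, `a_1 ≤ 2m`. Summing `a_j ≤ min (2m) (n - j + 1)`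
yields the bounds.
-/

open Finset

theorem Finset.sum_update_tsub_smul {ι M : Type*} [AddCommGroup M] [DecidableEq ι] {s : Finset ι}
    {i : ι} (hi : i ∈ s) (c : ι → ℕ) (H : ι → M) {d : ℕ} (hd : d ≤ c i) :
    ∑ x ∈ s, Function.update c i (c i - d) x • H x = ∑ x ∈ s, c x • H x - d • H i := by
  rw [← add_sum_erase _ _ hi, ← add_sum_erase s (fun x => c x • H x) hi, Function.update_self,
    sub_nsmul _ hd, sum_congr rfl fun x hx => by rw [Function.update_of_ne (ne_of_mem_erase hx)]]
  abel

theorem two_mul_sum_Ico_sub {n k₀ k : ℕ} (hk₀ : k₀ ≤ k) (hk : k ≤ n) :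
    2 * ∑ j ∈ Ico k₀ k, ((n - j : ℕ) : ℝ) = ((k : ℝ) - k₀) * (2 * n - k₀ - k + 1) := by
  induction k, hk₀ using Nat.le_induction with
  | base => simp
  | succ k hk₀k ih =>
    rw [sum_Ico_succ_top hk₀k, mul_add, ih (by omega), Nat.cast_sub (by omega)]
    push_cast
    ring

-- Models the coordinates `a_1 ≥ ⋯ ≥ a_n` of a canonical element, indexed from `0` and extended by
-- `0` beyond `n`: they descend in steps of `0` or `1` down to `a_{n+1} = 0`.
structure IsUnitStaircase (n : ℕ) (b : ℕ → ℕ) : Prop where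
  antitone : Antitone b
  le_succ_add_one : ∀ j, b j ≤ b (j + 1) + 1
  eq_zero : b n = 0

namespace IsUnitStaircase

variable {n : ℕ} {b : ℕ → ℕ}

theorem of_sum_Ioc {e : ℕ → ℕ} (he : ∀ i ∈ Icc 1 n, e i ≤ 1) :
    IsUnitStaircase n fun j => ∑ i ∈ Ioc j n, e i where
  antitone _ _ hjk := sum_le_sum_of_subset (Ioc_subset_Ioc_left hjk)
  le_succ_add_one j := by
    rcases lt_or_ge j n with hj | hj
    · rw [← Icc_add_one_left_eq_Ioc j n, ← Ioc_insert_left hj, sum_insert left_notMem_Ioc]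
      have := he (j + 1) (mem_Icc.mpr ⟨by omega, hj⟩)
      omega
    · simp [Ioc_eq_empty_of_le hj]
  eq_zero := by simp

variable (h : IsUnitStaircase n b)
include h

theorem le_add (j t : ℕ) : b j ≤ b (j + t) + t := by
  induction t with
  | zero => rfl
  | succ t ih =>
    have := h.le_succ_add_one (j + t)
    rw [add_assoc] at this
    omega

theorem eq_zero_of_le {j : ℕ} (hj : n ≤ j) : b j = 0 :=
  Nat.eq_zero_of_le_zero (h.eq_zero ▸ h.antitone hj)

theorem le_sub (j : ℕ) : b j ≤ n - j := by
  rcases le_total j n with hj | hj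
  · simpa [h.eq_zero, Nat.add_sub_cancel' hj] using h.le_add j (n - j)
  · simp [h.eq_zero_of_le hj]

theorem exists_apply_eq_of_le_apply_zero {v : ℕ} (hv : v ≤ b 0) : ∃ j, b j = v := by
  have hex : ∃ j, b j ≤ v := ⟨n, by simp [h.eq_zero]⟩
  refine ⟨Nat.find hex, le_antisymm (Nat.find_spec hex) ?_⟩
  cases hj : Nat.find hex with
  | zero => exact hv
  | succ j =>
    have : ¬b j ≤ v := Nat.find_min hex (by omega)
    have := h.le_succ_add_one j
    omega

theorem le_two_mul_card_odd : b 0 ≤ 2 * #{j ∈ range n | Odd (b j)} := by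
  have hsub : (range ((b 0 + 1) / 2)).image (fun t => 2 * t + 1) ⊆
      {j ∈ range n | Odd (b j)}.image b := by
    intro v hv
    obtain ⟨t, ht, rfl⟩ := mem_image.mp hv
    obtain ⟨j, hj⟩ := h.exists_apply_eq_of_le_apply_zero (v := 2 * t + 1)
      (by rw [mem_range] at ht; omega)
    have hjn : j < n := by
      by_contra hjn
      simp [h.eq_zero_of_le (not_lt.mp hjn)] at hj
    exact mem_image.mpr ⟨j, by simp [hjn, hj], hj⟩
  have := (card_le_card hsub).trans card_image_le
  rw [card_image_of_injective _ (fun _ _ _ => by omega), card_range] at this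
  omega

theorem sum_range_le_mul {B : ℕ} (hB : b 0 ≤ B) (k : ℕ) : ∑ j ∈ range k, b j ≤ k * B := by
  simpa using sum_le_card_nsmul (range k) b B fun j _ => (h.antitone j.zero_le).trans hB

theorem sum_range_le_add_sum_Ico {k₀ k : ℕ} (hk : k₀ ≤ k) :
    ∑ j ∈ range k, b j ≤ ∑ j ∈ range k₀, b j + ∑ j ∈ Ico k₀ k, (n - j) := by
  rw [← sum_range_add_sum_Ico _ hk]
  exact Nat.add_le_add_left (sum_le_sum fun j _ => h.le_sub j) _

theorem two_mul_sum_range_le {m k : ℕ} (hb0 : b 0 ≤ 2 * m) (hm : 2 * m ≤ n)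
    (hk₀ : n - 2 * m + 1 ≤ k) (hk : k ≤ n) :
    2 * ∑ j ∈ range k, (b j : ℝ) ≤
      4 * (m : ℝ) * ((n : ℝ) - 2 * m + 1) + ((k : ℝ) - n + 2 * m - 1) * (2 * (m : ℝ) + n - k) := by
  have hsum : ∑ j ∈ range k, (b j : ℝ) ≤
      ∑ j ∈ range (n - 2 * m + 1), (b j : ℝ) + ∑ j ∈ Ico (n - 2 * m + 1) k, ((n - j : ℕ) : ℝ) := by
    exact_mod_cast h.sum_range_le_add_sum_Ico hk₀
  have hhead : ∑ j ∈ range (n - 2 * m + 1), (b j : ℝ) ≤ ((n - 2 * m + 1 : ℕ) : ℝ) * (2 * m) := by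
    exact_mod_cast h.sum_range_le_mul hb0 (n - 2 * m + 1)
  have hgauss := two_mul_sum_Ico_sub hk₀ hk
  rw [Nat.cast_add, Nat.cast_sub hm] at hhead hgauss
  push_cast at hhead hgauss
  linarith

end IsUnitStaircase

theorem smul_eq_zero_of_minimal {n : ℕ} {𝔏 : Set (Fin n → ℝ)} {H : ℕ → Fin n → ℝ} {c : ℕ → ℕ}
    (hmin : ∀ c' : ℕ → ℕ, (∀ i ∈ Icc 1 n, c' i ≤ c i) →
      (∑ i ∈ Icc 1 n, c' i • H i) ∈ 𝔏 →
      (∑ i ∈ Icc 1 n, c i • H i - ∑ i ∈ Icc 1 n, c' i • H i) ∈ (fun v => (2 : ℝ) • v) '' 𝔏 →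
      (∑ i ∈ Icc 1 n, c' i • H i) = ∑ i ∈ Icc 1 n, c i • H i)
    {i d : ℕ} (hi : i ∈ Icc 1 n) (hd : d ≤ c i) {w : Fin n → ℝ} (hw : w ∈ 𝔏)
    (hdw : d • H i = (2 : ℝ) • w) (hsub : ∑ i ∈ Icc 1 n, c i • H i - d • H i ∈ 𝔏) :
    d • H i = 0 := by
  have hsum := sum_update_tsub_smul hi c H hd
  have hle : ∀ x ∈ Icc 1 n, Function.update c i (c i - d) x ≤ c x := fun x _ => by
    rcases eq_or_ne x i with rfl | hx
    · simp
    · simp [Function.update_of_ne hx]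
  have := hmin _ hle (hsum ▸ hsub) ⟨w, hw, by rw [hsum, sub_sub_cancel, hdw]⟩
  rwa [hsum, sub_eq_self] at this

theorem Hsp_apply (n i : ℕ) (j : Fin n) :
    Hsp n i j = if i = n then 1 / 2 else if (j : ℕ) + 1 ≤ i then 1 else 0 := by
  unfold Hsp
  split <;> rfl

theorem sum_smul_Hsp_apply {n : ℕ} (c : ℕ → ℕ) (j : Fin n) :
    (∑ i ∈ Icc 1 n, c i • Hsp n i) j = ∑ i ∈ Ioc (j : ℕ) n, if i = n then (c i : ℝ) / 2 else c i := by
  have hIoc : Ioc (j : ℕ) n = {i ∈ Icc 1 n | (j : ℕ) < i} := by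
    ext i
    simp only [mem_Ioc, mem_filter, mem_Icc]
    omega
  rw [Finset.sum_apply, hIoc, sum_filter]
  refine sum_congr rfl fun i hi => ?_
  have := j.isLt
  rw [mem_Icc] at hi
  simp only [Pi.smul_apply, Hsp_apply, nsmul_eq_mul]
  split_ifs <;> first | ring1 | (exfalso; omega)

namespace IntLat

variable {n : ℕ} {v w : Fin n → ℝ}

theorem sub_mem (hv : v ∈ IntLat n) (hw : w ∈ IntLat n) : v - w ∈ IntLat n := fun j => by
  obtain ⟨a, ha⟩ := hv j
  obtain ⟨b, hb⟩ := hw j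
  exact ⟨a - b, by simp [ha, hb]⟩

theorem two_smul_mem (hv : v ∈ IntLat n) : (2 : ℝ) • v ∈ IntLat n := fun j => by
  obtain ⟨a, ha⟩ := hv j
  exact ⟨2 * a, by simp [ha]⟩

end IntLat

section Coefficients

variable {n : ℕ} {c : ℕ → ℕ} (hlat : ∑ i ∈ Icc 1 n, c i • Hsp n i ∈ IntLat n)
  (hmin : ∀ c' : ℕ → ℕ, (∀ i ∈ Icc 1 n, c' i ≤ c i) →
    (∑ i ∈ Icc 1 n, c' i • Hsp n i) ∈ IntLat n →
    (∑ i ∈ Icc 1 n, c i • Hsp n i - ∑ i ∈ Icc 1 n, c' i • Hsp n i) ∈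
      (fun v => (2 : ℝ) • v) '' IntLat n →
    (∑ i ∈ Icc 1 n, c' i • Hsp n i) = ∑ i ∈ Icc 1 n, c i • Hsp n i)
include hlat hmin

theorem coeff_le_one_of_minimal {i : ℕ} (hi : 1 ≤ i) (hin : i < n) : c i ≤ 1 := by
  by_contra! hci
  have hH : Hsp n i ∈ IntLat n := fun j =>
    ⟨if (j : ℕ) + 1 ≤ i then 1 else 0, by rw [Hsp_apply, if_neg hin.ne]; split_ifs <;> simp⟩
  have h2 : 2 • Hsp n i = (2 : ℝ) • Hsp n i := (Nat.cast_smul_eq_nsmul ℝ 2 _).symm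
  have := congrFun (smul_eq_zero_of_minimal hmin (mem_Icc.mpr ⟨hi, hin.le⟩) hci hH h2
    (IntLat.sub_mem hlat (h2 ▸ IntLat.two_smul_mem hH))) ⟨0, by omega⟩
  simp [Hsp_apply, hin.ne, hi] at this

theorem coeff_last_le_three_of_minimal (hn : 1 ≤ n) : c n ≤ 3 := by
  by_contra! hcn
  have h1 : (fun _ => 1 : Fin n → ℝ) ∈ IntLat n := fun _ => ⟨1, by simp⟩
  have h4 : 4 • Hsp n n = (2 : ℝ) • fun _ => 1 := by
    ext j
    rw [Pi.smul_apply, Hsp_apply, if_pos rfl]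
    norm_num
  have := congrFun (smul_eq_zero_of_minimal hmin (mem_Icc.mpr ⟨hn, le_rfl⟩) hcn h1 h4
    (IntLat.sub_mem hlat (h4 ▸ IntLat.two_smul_mem h1))) ⟨0, by omega⟩
  simp [Hsp_apply] at this

end Coefficients

theorem exists_isUnitStaircase_of_mem_symCanonSet {n : ℕ} (hn : 1 ≤ n) {ξ : Fin n → ℝ}
    (hξ : ξ ∈ SymCanonSet n (IntLat n) (Hsp n)) :
    ∃ b : ℕ → ℕ, IsUnitStaircase n b ∧ ξ = fun j : Fin n => (b j : ℝ) := by
  obtain ⟨c, rfl, hlat, hmin⟩ := hξ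
  have hcn : 2 ∣ c n := by
    obtain ⟨z, hz⟩ := hlat ⟨n - 1, by omega⟩
    have hIoc : Ioc (n - 1) n = {n} := by
      ext i
      simp only [mem_Ioc, mem_singleton]
      omega
    rw [sum_smul_Hsp_apply, hIoc, sum_singleton, if_pos rfl, div_eq_iff two_ne_zero] at hz
    exact Int.natCast_dvd_natCast.mp ⟨z, by exact_mod_cast hz.trans (mul_comm _ _)⟩
  refine ⟨fun j => ∑ i ∈ Ioc j n, if i = n then c n / 2 else c i,
    IsUnitStaircase.of_sum_Ioc fun i hi => ?_, funext fun j => ?_⟩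
  · rw [mem_Icc] at hi
    split_ifs with hin
    · have := coeff_last_le_three_of_minimal hlat hmin hn
      omega
    · exact coeff_le_one_of_minimal hlat hmin hi.1 (by omega)
  · rw [sum_smul_Hsp_apply, Nat.cast_sum]
    refine sum_congr rfl fun i _ => ?_
    split_ifs with hin
    · rw [hin, Nat.cast_div_charZero hcn, Nat.cast_ofNat]
    · rfl

theorem partialSum_natCast {n : ℕ} {b : ℕ → ℕ} (hb : ∀ j, n ≤ j → b j = 0) (k : ℕ) :
    partialSum n (fun j : Fin n => (b j : ℝ)) k = ∑ j ∈ range k, (b j : ℝ) := by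
  rw [partialSum, sum_filter,
    Fin.sum_univ_eq_sum_range (fun j => if j + 1 ≤ k then (b j : ℝ) else 0), ← sum_filter]
  refine sum_subset (fun j hj => ?_) (fun j hj hj' => ?_)
  · simp only [mem_filter, mem_range] at hj ⊢
    omega
  · simp only [mem_filter, mem_range, not_and, not_le] at hj hj'
    have hjn : n ≤ j := by
      by_contra! h
      have := hj' h
      omega
    simp [hb j hjn]

section NatCast

variable {n : ℕ} (b : ℕ → ℕ)

theorem card_filter_exists_intCast_eq_natCast (p : ℤ → Prop) :
    #{j : Fin n | ∃ z : ℤ, p z ∧ (b j : ℝ) = z} = #{j ∈ range n | p (b j)} := by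
  have hiff : ∀ j, (∃ z : ℤ, p z ∧ (b j : ℝ) = z) ↔ p (b j) := fun j =>
    ⟨fun ⟨z, hz, he⟩ => by rwa [show z = b j by exact_mod_cast he.symm] at hz,
      fun h => ⟨b j, h, by simp⟩⟩
  simp only [hiff, card_filter]
  exact Fin.sum_univ_eq_sum_range (fun j => if p (b j) then 1 else 0) n

theorem nOdd_natCast : nOdd n (fun j : Fin n => (b j : ℝ)) = #{j ∈ range n | Odd (b j)} := by
  simp [nOdd, card_filter_exists_intCast_eq_natCast]

theorem nOdd_add_nEven_natCast :
    nOdd n (fun j : Fin n => (b j : ℝ)) + nEven n (fun j : Fin n => (b j : ℝ)) = n := by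
  simp only [nOdd, nEven, card_filter_exists_intCast_eq_natCast, Int.odd_coe_nat,
    Int.even_coe_nat, ← Nat.not_odd_iff_even, card_filter_add_card_filter_not, card_range]

end NatCast

theorem sp_symmetric_uniton_bounds (n : ℕ) (hn : 1 ≤ n) (ξ : Fin n → ℝ)
    (hξ : ξ ∈ SymCanonSet n (IntLat n) (Hsp n))
    (hle : 2 * nOdd n ξ ≤ 2 * nEven n ξ)
    (m : ℕ) (hm : m = nOdd n ξ) :
    (∀ k : ℕ, 1 ≤ k → k ≤ n - 2 * m + 1 →
      2 * partialSum n ξ k ≤ 4 * (m : ℝ) * k) ∧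
    (∀ k : ℕ, n - 2 * m + 1 < k → k ≤ n →
      2 * partialSum n ξ k ≤
        4 * (m : ℝ) * ((n : ℝ) - 2 * m + 1) +
          ((k : ℝ) - n + 2 * m - 1) * (2 * (m : ℝ) + n - k)) ∧
    2 * partialSum n ξ 1 ≤ 4 * (m : ℝ) ∧
    (2 * m < n → 2 * partialSum n ξ 2 ≤ 8 * (m : ℝ)) ∧
    (2 * m = n → 2 * partialSum n ξ 2 ≤ 8 * (m : ℝ) - 2) := by
  obtain ⟨b, hb, rfl⟩ := exists_isUnitStaircase_of_mem_symCanonSet hn hξ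
  have hb0 : b 0 ≤ 2 * m := hm ▸ nOdd_natCast b ▸ hb.le_two_mul_card_odd
  have hmn : 2 * m ≤ n := by
    have := nOdd_add_nEven_natCast (n := n) b
    omega
  have hlow (k : ℕ) : 2 * ∑ j ∈ range k, (b j : ℝ) ≤ 4 * m * k := by
    have : ∑ j ∈ range k, (b j : ℝ) ≤ k * (2 * m) := by exact_mod_cast hb.sum_range_le_mul hb0 k
    linarith
  simp only [partialSum_natCast fun _ => hb.eq_zero_of_le]
  refine ⟨fun k _ _ => hlow k, fun k hk hkn => hb.two_mul_sum_range_le hb0 hmn hk.le hkn,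
    by simpa using hlow 1, fun _ => (hlow 2).trans_eq (by ring), fun h2m => ?_⟩
  have := hb.two_mul_sum_range_le hb0 hmn (k := 2) (by omega) (by omega)
  rw [← h2m] at this
  push_cast at this
  linarith
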